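/- arXiv:2004.11102 — 2 statements merged into one kernel-verified Lean document; each statement's English description precedes it below -/
import Mathlib

section
/- Let B : [0,δ] → M_d(ℝ) be continuous with B(t) symmetric for all t, and let M(t) solve the linear matrix ODE M'(t) = B(t)M(t) with M(0)M(0)ᵀ = A₀ for a positive definite symmetric A₀. If B(t)(M(t)M(t)ᵀ) + (M(t)M(t)ᵀ)B(t) = A'(t) with A(0) = A₀, then M(t)M(t)ᵀ = A(t) for all t. -/
open Matrix Set

/-! Because `B` is symmetric, the product rule gives `(M Mᵀ)' = B M Mᵀ + M Mᵀ B`, which is the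
derivative prescribed for `A`. So `M Mᵀ - A` has zero derivative on `[0, δ]` and vanishes at `0`. -/

theorem eqOn_Icc_of_hasDerivAt_eq {E : Type*} [NormedAddCommGroup E] [NormedSpace ℝ E]
    {f g f' : ℝ → E} {a b : ℝ}
    (hf : ∀ x ∈ Icc a b, HasDerivAt f (f' x) x) (hg : ∀ x ∈ Icc a b, HasDerivAt g (f' x) x)
    (ha : f a = g a) : EqOn f g (Icc a b) :=
  eq_of_has_deriv_right_eq
    (fun x hx => (hf x (Ico_subset_Icc_self hx)).hasDerivWithinAt)
    (fun x hx => (hg x (Ico_subset_Icc_self hx)).hasDerivWithinAt)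
    (fun x hx => (hf x hx).continuousAt.continuousWithinAt)
    (fun x hx => (hg x hx).continuousAt.continuousWithinAt) ha

section MatrixDeriv

variable {𝕜 : Type*} [NontriviallyNormedField 𝕜] {m n p : Type*} [Fintype n] {t : 𝕜}

theorem hasDerivAt_matrix_mul_apply {M : 𝕜 → Matrix m n 𝕜} {N : 𝕜 → Matrix n p 𝕜}
    {M' : Matrix m n 𝕜} {N' : Matrix n p 𝕜}
    (hM : ∀ i j, HasDerivAt (fun s => M s i j) (M' i j) t)
    (hN : ∀ i j, HasDerivAt (fun s => N s i j) (N' i j) t) (i : m) (k : p) :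
    HasDerivAt (fun s => (M s * N s) i k) ((M' * N t + M t * N') i k) t := by
  simp only [mul_apply, Matrix.add_apply, ← Finset.sum_add_distrib]
  exact HasDerivAt.fun_sum fun j _ => (hM i j).fun_mul (hN j k)

theorem hasDerivAt_mul_transpose_apply {M : 𝕜 → Matrix m n 𝕜} {M' : Matrix m n 𝕜}
    (hM : ∀ i j, HasDerivAt (fun s => M s i j) (M' i j) t) (i k : m) :
    HasDerivAt (fun s => (M s * (M s)ᵀ) i k) ((M' * (M t)ᵀ + M t * M'ᵀ) i k) t :=
  hasDerivAt_matrix_mul_apply hM (fun i j => hM j i) i k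

end MatrixDeriv

theorem Matrix.IsSymm.mul_mul_transpose_add {R n : Type*} [CommRing R] [Fintype n]
    {B : Matrix n n R} (hB : B.IsSymm) (M : Matrix n n R) :
    B * M * Mᵀ + M * (B * M)ᵀ = B * (M * Mᵀ) + M * Mᵀ * B := by
  rw [transpose_mul, hB.eq, Matrix.mul_assoc, Matrix.mul_assoc]

theorem mmT_eq_A_general (d : ℕ) (δ : ℝ)
    (B M A : ℝ → Matrix (Fin d) (Fin d) ℝ)
    (hBsymm : ∀ t ∈ Icc (0:ℝ) δ, (B t).IsSymm)
    (hM : ∀ t ∈ Icc (0:ℝ) δ, ∀ i j,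
      HasDerivAt (fun s => M s i j) ((B t * M t) i j) t)
    (hM0 : M 0 * (M 0)ᵀ = A 0)
    (hA : ∀ t ∈ Icc (0:ℝ) δ, ∀ i j,
      HasDerivAt (fun s => A s i j)
        ((B t * (M t * (M t)ᵀ) + (M t * (M t)ᵀ) * B t) i j) t) :
    ∀ t ∈ Icc (0:ℝ) δ, M t * (M t)ᵀ = A t := by
  have hMMt : ∀ t ∈ Icc (0:ℝ) δ, ∀ i j, HasDerivAt (fun s => (M s * (M s)ᵀ) i j)
      ((B t * (M t * (M t)ᵀ) + (M t * (M t)ᵀ) * B t) i j) t := fun t ht i j => by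
    rw [← (hBsymm t ht).mul_mul_transpose_add]
    exact hasDerivAt_mul_transpose_apply (hM t ht) i j
  intro t ht
  ext i j
  exact eqOn_Icc_of_hasDerivAt_eq (fun s hs => hMMt s hs i j) (fun s hs => hA s hs i j)
    (congrFun₂ hM0 i j) ht

/-- If `M` solves `M' = B M` with `B t` symmetric, `M 0 * (M 0)ᵀ = A 0` with
`A 0` positive definite, and `A` solves `A' = B (M Mᵀ) + (M Mᵀ) B`, then
`M t * (M t)ᵀ = A t` on `[0,δ]`. -/
theorem mmT_eq_A (d : ℕ) (δ : ℝ) (hδ : 0 < δ)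
    (B M A : ℝ → Matrix (Fin d) (Fin d) ℝ)
    (hBcont : ∀ i j, ContinuousOn (fun t => B t i j) (Icc (0:ℝ) δ))
    (hBsymm : ∀ t ∈ Icc (0:ℝ) δ, (B t).IsSymm)
    (hM : ∀ t ∈ Icc (0:ℝ) δ, ∀ i j,
      HasDerivAt (fun s => M s i j) ((B t * M t) i j) t)
    (hA0pos : (A 0).PosDef) (hA0symm : (A 0).IsSymm)
    (hM0 : M 0 * (M 0)ᵀ = A 0)
    (hA : ∀ t ∈ Icc (0:ℝ) δ, ∀ i j,
      HasDerivAt (fun s => A s i j)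
        ((B t * (M t * (M t)ᵀ) + (M t * (M t)ᵀ) * B t) i j) t) :
    ∀ t ∈ Icc (0:ℝ) δ, M t * (M t)ᵀ = A t :=
  mmT_eq_A_general d δ B M A hBsymm hM hM0 hA
end

section
/- Let H be a smooth Hamiltonian satisfying, along the segment {(te₀,0) : t ∈ [0,δ]}: H has the expansion H(q,p) = f(q) + w(q)p₀ + ½a(q₀)p₀² − p_*B(q₀)q_* + ½⟨p_*,p_*⟩ + O₃(q_*,p) with B(q₀) symmetric. Then the vertical symplectic map Ψ(q,p) = (q, p + du_q) with u(q) = ½⟨B(q₀)q_*, q_*⟩ transforms H into H∘Ψ(q,p) = f̃(q) + w̃(q)p₀ + ½a(q₀)p₀² + ½⟨p_*,p_*⟩ + O₃(q_*,p), eliminating the cross term p_*B(q₀)q_*. -/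
open Set Matrix

/-- `R` vanishes to third order in `(q_*, p)` along the segment
`{(te₀,0) : t ∈ [0,δ]}`. -/
def ThirdOrder (d : ℕ) (δ : ℝ)
    (R : (Fin (d+1) → ℝ) → (Fin (d+1) → ℝ) → ℝ) : Prop :=
  ∃ C ε : ℝ, 0 < ε ∧ ∀ q p : Fin (d+1) → ℝ, q 0 ∈ Icc (0:ℝ) δ →
    ‖(fun k : Fin d => q k.succ)‖ + ‖p‖ ≤ ε →
    |R q p| ≤ C * (‖(fun k : Fin d => q k.succ)‖ + ‖p‖) ^ 3

noncomputable def grad (d : ℕ) (B : ℝ → Matrix (Fin d) (Fin d) ℝ)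
    (q : Fin (d+1) → ℝ) : Fin (d+1) → ℝ :=
  fun i => Fin.cases
    ((1/2) * ∑ a : Fin d, (∑ b : Fin d, deriv (fun s => B s a b) (q 0) * q b.succ) * q a.succ)
    (fun m => ∑ b : Fin d, B (q 0) m b * q b.succ) i

lemma hasDerivAt_line {n : ℕ} (u : (Fin n → ℝ) → ℝ) (q v : Fin n → ℝ)
    (hu : DifferentiableAt ℝ u q) :
    HasDerivAt (fun t : ℝ => u (q + t • v)) (fderiv ℝ u q v) 0 := by
  have h1 : HasDerivAt (fun t : ℝ => q + t • v) v 0 := by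
    simpa using ((hasDerivAt_id (0:ℝ)).smul_const v).const_add q
  have h0 : q + (0:ℝ) • v = q := by simp
  have h2 := (h0 ▸ hu.hasFDerivAt).comp_hasDerivAt (x := (0:ℝ)) h1
  simpa [Function.comp_def] using h2

lemma contDiff_U (d : ℕ) (B : ℝ → Matrix (Fin d) (Fin d) ℝ)
    (hB : ∀ i j, ContDiff ℝ (⊤ : ℕ∞) (fun t => B t i j)) :
    ContDiff ℝ (⊤ : ℕ∞) (fun q : Fin (d+1) → ℝ =>
      (1/2) * ∑ a : Fin d, (∑ b : Fin d, B (q 0) a b * q b.succ) * q a.succ) := by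
  have hcoord : ∀ i : Fin (d+1), ContDiff ℝ (⊤ : ℕ∞) (fun q : Fin (d+1) → ℝ => q i) :=
    fun i => (ContinuousLinearMap.proj i : (Fin (d+1) → ℝ) →L[ℝ] ℝ).contDiff
  exact contDiff_const.mul <| ContDiff.sum fun a _ =>
    (ContDiff.sum fun b _ => ((hB a b).comp (hcoord 0)).mul (hcoord b.succ)).mul (hcoord a.succ)

lemma fderiv_U (d : ℕ) (B : ℝ → Matrix (Fin d) (Fin d) ℝ)
    (hB : ∀ i j, ContDiff ℝ (⊤ : ℕ∞) (fun t => B t i j))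
    (hBsymm : ∀ t, (B t).IsSymm)
    (q : Fin (d+1) → ℝ) (i : Fin (d+1)) :
    fderiv ℝ (fun q : Fin (d+1) → ℝ =>
      (1/2) * ∑ a : Fin d, (∑ b : Fin d, B (q 0) a b * q b.succ) * q a.succ)
      q (Pi.single i 1) = grad d B q i := by
  set U : (Fin (d+1) → ℝ) → ℝ := fun q =>
    (1/2) * ∑ a : Fin d, (∑ b : Fin d, B (q 0) a b * q b.succ) * q a.succ with hU
  have hdiff : DifferentiableAt ℝ U q :=
    ((contDiff_U d B hB).differentiable (by simp)) q
  have hline := hasDerivAt_line U q (Pi.single i 1) hdiff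
  induction i using Fin.cases with
  | zero =>
    have heq : (fun t : ℝ => U (q + t • (Pi.single (0 : Fin (d+1)) (1:ℝ) : Fin (d+1) → ℝ))) =
        fun t => (1/2) * ∑ a : Fin d,
          (∑ b : Fin d, B (q 0 + t) a b * q b.succ) * q a.succ := by
      funext t
      simp [hU, Pi.single_apply, Fin.succ_ne_zero]
    have hBd : ∀ a b : Fin d, HasDerivAt (fun t : ℝ => B (q 0 + t) a b)
        (deriv (fun s => B s a b) (q 0)) 0 := by
      intro a b
      have h1 : HasDerivAt (fun s => B s a b) (deriv (fun s => B s a b) (q 0))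
          ((fun t : ℝ => q 0 + t) 0) := by
        simpa using (((hB a b).differentiable (by simp)) (q 0)).hasDerivAt
      have h2 : HasDerivAt (fun t : ℝ => q 0 + t) 1 0 := by
        simpa using (hasDerivAt_id (0:ℝ)).const_add (q 0)
      simpa [Function.comp_def] using h1.comp (x := (0:ℝ)) h2
    have hval : HasDerivAt
        (fun t : ℝ => U (q + t • (Pi.single (0 : Fin (d+1)) (1:ℝ) : Fin (d+1) → ℝ)))
        ((1/2) * ∑ a : Fin d,
          (∑ b : Fin d, deriv (fun s => B s a b) (q 0) * q b.succ) * q a.succ) 0 := by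
      rw [heq]
      exact HasDerivAt.const_mul _ (HasDerivAt.fun_sum fun a _ =>
        ((HasDerivAt.fun_sum fun b _ => (hBd a b).mul_const _).mul_const _))
    rw [hline.unique hval]
    simp [grad]
  | succ m =>
    have heq : (fun t : ℝ => U (q + t • (Pi.single (m.succ : Fin (d+1)) (1:ℝ) : Fin (d+1) → ℝ))) =
        fun t => (1/2) * ∑ a : Fin d,
          (∑ b : Fin d, B (q 0) a b * (q b.succ + t * (if b = m then (1:ℝ) else 0)))
            * (q a.succ + t * (if a = m then (1:ℝ) else 0)) := by
      funext t
      have h0 : ((0 : Fin (d+1)) = m.succ) = False := by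
        simp [(Fin.succ_ne_zero m).symm]
      have hsb : ∀ b : Fin d, ((b.succ : Fin (d+1)) = m.succ) = (b = m) := by
        intro b; simp [Fin.succ_inj]
      simp only [hU, Pi.add_apply, Pi.smul_apply, Pi.single_apply, smul_eq_mul, h0, if_false,
        hsb, mul_zero, add_zero]
    have hfac : ∀ b : Fin d, HasDerivAt
        (fun t : ℝ => q b.succ + t * (if b = m then (1:ℝ) else 0))
        (if b = m then (1:ℝ) else 0) 0 := by
      intro b
      simpa using ((hasDerivAt_id (0:ℝ)).mul_const (if b = m then (1:ℝ) else 0)).const_add (q b.succ)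
    have hval : HasDerivAt
        (fun t : ℝ => U (q + t • (Pi.single (m.succ : Fin (d+1)) (1:ℝ) : Fin (d+1) → ℝ)))
        ((1/2) * ∑ a : Fin d,
          ((∑ b : Fin d, B (q 0) a b * (if b = m then (1:ℝ) else 0))
              * (q a.succ + 0 * (if a = m then (1:ℝ) else 0))
            + (∑ b : Fin d, B (q 0) a b * (q b.succ + 0 * (if b = m then (1:ℝ) else 0)))
              * (if a = m then (1:ℝ) else 0))) 0 := by
      rw [heq]
      exact HasDerivAt.const_mul _ (HasDerivAt.fun_sum fun a _ =>
        (HasDerivAt.fun_sum fun b _ => (hfac b).const_mul _).fun_mul (hfac a))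
    rw [hline.unique hval]
    have hsym : ∀ a : Fin d, B (q 0) a m = B (q 0) m a := fun a =>
      (hBsymm (q 0)).apply m a
    simp only [grad, Fin.cases_succ, zero_mul, add_zero, mul_ite, mul_one, mul_zero,
      Finset.sum_ite_eq', Finset.mem_univ, if_true, ite_mul, zero_mul,
      Finset.sum_ite_eq, Finset.sum_add_distrib, ite_self, add_zero]
    simp_rw [hsym]
    ring

lemma grad_succ_bound (d : ℕ) (B : ℝ → Matrix (Fin d) (Fin d) ℝ) (M : ℝ)
    (q : Fin (d+1) → ℝ) (hM : ∀ a b, |B (q 0) a b| ≤ M) (k : Fin d) :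
    |grad d B q k.succ| ≤ d * M * ‖(fun k : Fin d => q k.succ)‖ := by
  have h1 : |grad d B q k.succ| ≤ ∑ b : Fin d, |B (q 0) k b * q b.succ| := by
    simpa [grad] using Finset.abs_sum_le_sum_abs
      (fun b => B (q 0) k b * q b.succ) Finset.univ
  refine h1.trans ?_
  have h2 : ∀ b : Fin d, |B (q 0) k b * q b.succ| ≤ M * ‖(fun k : Fin d => q k.succ)‖ := by
    intro b
    rw [abs_mul]
    have hb : |q b.succ| ≤ ‖(fun k : Fin d => q k.succ)‖ := by
      simpa using norm_le_pi_norm (fun k : Fin d => q k.succ) b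
    exact mul_le_mul (hM k b) hb (abs_nonneg _)
      ((abs_nonneg _).trans (hM k b))
  calc ∑ b : Fin d, |B (q 0) k b * q b.succ|
      ≤ ∑ _b : Fin d, M * ‖(fun k : Fin d => q k.succ)‖ :=
        Finset.sum_le_sum fun b _ => h2 b
    _ = d * (M * ‖(fun k : Fin d => q k.succ)‖) := by
        simp [Finset.sum_const, Finset.card_univ, mul_comm]
    _ = d * M * ‖(fun k : Fin d => q k.succ)‖ := by ring

lemma grad_zero_bound (d : ℕ) (B : ℝ → Matrix (Fin d) (Fin d) ℝ) (M : ℝ)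
    (q : Fin (d+1) → ℝ) (hM : ∀ a b, |deriv (fun s => B s a b) (q 0)| ≤ M)
    (hM0 : 0 ≤ M) :
    |grad d B q 0| ≤ (1/2) * (d * M) * ‖(fun k : Fin d => q k.succ)‖ ^ 2 * d := by
  have hnn : (0:ℝ) ≤ ‖(fun k : Fin d => q k.succ)‖ := norm_nonneg _
  have hb : ∀ b : Fin d, |q b.succ| ≤ ‖(fun k : Fin d => q k.succ)‖ := by
    intro b; simpa using norm_le_pi_norm (fun k : Fin d => q k.succ) b
  have hterm : ∀ a : Fin d,
      |(∑ b : Fin d, deriv (fun s => B s a b) (q 0) * q b.succ) * q a.succ|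
        ≤ (d * M) * ‖(fun k : Fin d => q k.succ)‖ ^ 2 := by
    intro a
    rw [abs_mul]
    have h1 : |∑ b : Fin d, deriv (fun s => B s a b) (q 0) * q b.succ|
        ≤ d * M * ‖(fun k : Fin d => q k.succ)‖ := by
      refine (Finset.abs_sum_le_sum_abs _ _).trans ?_
      calc ∑ b : Fin d, |deriv (fun s => B s a b) (q 0) * q b.succ|
          ≤ ∑ _b : Fin d, M * ‖(fun k : Fin d => q k.succ)‖ := by
            refine Finset.sum_le_sum fun b _ => ?_
            rw [abs_mul]
            exact mul_le_mul (hM a b) (hb b) (abs_nonneg _) hM0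
        _ = d * M * ‖(fun k : Fin d => q k.succ)‖ := by
            simp [Finset.sum_const, Finset.card_univ]; ring
    calc |∑ b : Fin d, deriv (fun s => B s a b) (q 0) * q b.succ| * |q a.succ|
        ≤ (d * M * ‖(fun k : Fin d => q k.succ)‖) * ‖(fun k : Fin d => q k.succ)‖ :=
          mul_le_mul h1 (hb a) (abs_nonneg _)
            (by positivity)
      _ = (d * M) * ‖(fun k : Fin d => q k.succ)‖ ^ 2 := by ring
  have h2 : |grad d B q 0| ≤ (1/2) *
      ∑ a : Fin d, |(∑ b : Fin d, deriv (fun s => B s a b) (q 0) * q b.succ) * q a.succ| := by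
    rw [show grad d B q 0 = (1/2) * ∑ a : Fin d,
        (∑ b : Fin d, deriv (fun s => B s a b) (q 0) * q b.succ) * q a.succ from rfl,
      abs_mul]
    have : |(1/2 : ℝ)| = 1/2 := by norm_num
    rw [this]
    exact mul_le_mul_of_nonneg_left (Finset.abs_sum_le_sum_abs _ _) (by norm_num)
  refine h2.trans ?_
  calc (1/2 : ℝ) * ∑ a : Fin d, |(∑ b : Fin d, deriv (fun s => B s a b) (q 0) * q b.succ) * q a.succ|
      ≤ (1/2) * ∑ _a : Fin d, (d * M) * ‖(fun k : Fin d => q k.succ)‖ ^ 2 :=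
        mul_le_mul_of_nonneg_left (Finset.sum_le_sum fun a _ => hterm a) (by norm_num)
    _ = (1/2) * (d * M) * ‖(fun k : Fin d => q k.succ)‖ ^ 2 * d := by
        simp [Finset.sum_const, Finset.card_univ]; ring

/-- Eliminating the cross term `p_*B(q₀)q_*`: if
`H(q,p) = f(q) + w(q)p₀ + ½a(q₀)p₀² - p_*B(q₀)q_* + ½⟨p_*,p_*⟩ + O₃(q_*,p)`
with `B(q₀)` symmetric, then the vertical symplectic map `Ψ(q,p) = (q, p+du_q)`
with `u(q) = ½⟨B(q₀)q_*, q_*⟩` transforms `H` into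
`H∘Ψ(q,p) = f̃(q) + w̃(q)p₀ + ½a(q₀)p₀² + ½⟨p_*,p_*⟩ + O₃(q_*,p)`,
with `f̃`, `w̃` agreeing with `f`, `w` on the axis. -/
theorem eliminate_cross_term (d : ℕ) (δ : ℝ) (hδ : 0 < δ)
    (H : (Fin (d+1) → ℝ) → (Fin (d+1) → ℝ) → ℝ)
    (hH : ContDiff ℝ (⊤ : ℕ∞) (fun x : (Fin (d+1) → ℝ) × (Fin (d+1) → ℝ) => H x.1 x.2))
    (f w : (Fin (d+1) → ℝ) → ℝ) (a : ℝ → ℝ)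
    (B : ℝ → Matrix (Fin d) (Fin d) ℝ)
    (hB : ∀ i j, ContDiff ℝ (⊤ : ℕ∞) (fun t => B t i j))
    (hBsymm : ∀ t, (B t).IsSymm)
    (R : (Fin (d+1) → ℝ) → (Fin (d+1) → ℝ) → ℝ)
    (hR : ThirdOrder d δ R)
    (hexp : ∀ q p : Fin (d+1) → ℝ,
      H q p = f q + w q * p 0 + (1/2) * a (q 0) * (p 0)^2
        - (fun k : Fin d => p k.succ) ⬝ᵥ (B (q 0) *ᵥ fun k : Fin d => q k.succ)
        + (1/2) * ((fun k : Fin d => p k.succ) ⬝ᵥ fun k : Fin d => p k.succ)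
        + R q p)
    (u : (Fin (d+1) → ℝ) → ℝ)
    (hu : u = fun q => (1/2) *
      ((B (q 0) *ᵥ fun k : Fin d => q k.succ) ⬝ᵥ fun k : Fin d => q k.succ)) :
    ∃ (ft wt : (Fin (d+1) → ℝ) → ℝ)
      (Rt : (Fin (d+1) → ℝ) → (Fin (d+1) → ℝ) → ℝ),
      ThirdOrder d δ Rt ∧
      (∀ q p : Fin (d+1) → ℝ,
        H q (p + fun i => fderiv ℝ u q (Pi.single i 1))
          = ft q + wt q * p 0 + (1/2) * a (q 0) * (p 0)^2
            + (1/2) * ((fun k : Fin d => p k.succ) ⬝ᵥ fun k : Fin d => p k.succ)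
            + Rt q p) ∧
      (∀ t ∈ Icc (0:ℝ) δ,
        ft (t • (Pi.single 0 1 : Fin (d+1) → ℝ))
          = f (t • (Pi.single 0 1 : Fin (d+1) → ℝ)) ∧
        wt (t • (Pi.single 0 1 : Fin (d+1) → ℝ))
          = w (t • (Pi.single 0 1 : Fin (d+1) → ℝ))) := by
  -- rewrite u in "sum" form
  have hUeq : u = fun q : Fin (d+1) → ℝ =>
      (1/2) * ∑ a : Fin d, (∑ b : Fin d, B (q 0) a b * q b.succ) * q a.succ := by
    rw [hu]; funext q; simp [Matrix.mulVec, dotProduct]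
  have hg : ∀ (q : Fin (d+1) → ℝ) (i : Fin (d+1)),
      fderiv ℝ u q (Pi.single i 1) = grad d B q i := by
    rw [hUeq]; exact fun q i => fderiv_U d B hB hBsymm q i
  refine ⟨fun q => f q + w q * grad d B q 0 + (1/2) * a (q 0) * (grad d B q 0)^2
      - (1/2) * ((B (q 0) *ᵥ fun k : Fin d => q k.succ) ⬝ᵥ
          (B (q 0) *ᵥ fun k : Fin d => q k.succ)),
    fun q => w q + a (q 0) * grad d B q 0,
    fun q p => R q (p + grad d B q), ?_, ?_, ?_⟩
  · -- ThirdOrder for the new remainder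
    obtain ⟨C, ε, hε, hRb⟩ := hR
    -- uniform entry bounds on the compact segment
    have hct : ContinuousOn (fun t : ℝ => ∑ a : Fin d, ∑ b : Fin d,
        (|B t a b| + |deriv (fun s => B s a b) t|)) (Icc 0 δ) := by
      apply Continuous.continuousOn
      refine continuous_finset_sum _ fun a _ => continuous_finset_sum _ fun b _ => ?_
      exact ((hB a b).continuous.abs.add ((hB a b).continuous_deriv (by simp)).abs)
    obtain ⟨M0, hM0⟩ := isCompact_Icc.exists_bound_of_continuousOn hct
    set M : ℝ := max M0 1 with hM
    have hM1 : (1:ℝ) ≤ M := le_max_right _ _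
    have hMnn : (0:ℝ) ≤ M := le_trans zero_le_one hM1
    have hent : ∀ t ∈ Icc (0:ℝ) δ, ∀ a b : Fin d,
        |B t a b| ≤ M ∧ |deriv (fun s => B s a b) t| ≤ M := by
      intro t ht a b
      have hsum : |B t a b| + |deriv (fun s => B s a b) t|
          ≤ ∑ a' : Fin d, ∑ b' : Fin d, (|B t a' b'| + |deriv (fun s => B s a' b') t|) := by
        calc |B t a b| + |deriv (fun s => B s a b) t|
            ≤ ∑ b' : Fin d, (|B t a b'| + |deriv (fun s => B s a b') t|) :=
              Finset.single_le_sum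
                (f := fun b' => |B t a b'| + |deriv (fun s => B s a b') t|)
                (fun _ _ => by positivity) (Finset.mem_univ b)
          _ ≤ ∑ a' : Fin d, ∑ b' : Fin d, (|B t a' b'| + |deriv (fun s => B s a' b') t|) :=
              Finset.single_le_sum
                (f := fun a' => ∑ b' : Fin d, (|B t a' b'| + |deriv (fun s => B s a' b') t|))
                (fun _ _ => Finset.sum_nonneg fun _ _ => by positivity) (Finset.mem_univ a)
      have hsM : (∑ a' : Fin d, ∑ b' : Fin d,
          (|B t a' b'| + |deriv (fun s => B s a' b') t|)) ≤ M := by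
        have := hM0 t ht
        rw [Real.norm_eq_abs] at this
        exact le_trans (le_abs_self _) (this.trans (le_max_left _ _))
      constructor
      · nlinarith [abs_nonneg (deriv (fun s => B s a b) t)]
      · nlinarith [abs_nonneg (B t a b)]
    set K : ℝ := (d:ℝ) * M + (1/2) * ((d:ℝ) * M) * d with hK
    have hKnn : (0:ℝ) ≤ K := by positivity
    have hgrad : ∀ q : Fin (d+1) → ℝ, q 0 ∈ Icc (0:ℝ) δ →
        ‖(fun k : Fin d => q k.succ)‖ ≤ 1 →
        ‖grad d B q‖ ≤ K * ‖(fun k : Fin d => q k.succ)‖ := by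
      intro q hq0 hq1
      have hnn : (0:ℝ) ≤ ‖(fun k : Fin d => q k.succ)‖ := norm_nonneg _
      rw [pi_norm_le_iff_of_nonneg (by positivity)]
      intro i
      rw [Real.norm_eq_abs]
      induction i using Fin.cases with
      | zero =>
        have h1 := grad_zero_bound d B M q (fun a b => (hent (q 0) hq0 a b).2) hMnn
        refine h1.trans ?_
        rw [hK]
        have e1 : (0:ℝ) ≤ (1/2) * ((d:ℝ)*M) * d * (‖(fun k : Fin d => q k.succ)‖
            * (1 - ‖(fun k : Fin d => q k.succ)‖)) := by
          have := sub_nonneg.2 hq1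
          positivity
        have e2 : (0:ℝ) ≤ (d:ℝ)*M*‖(fun k : Fin d => q k.succ)‖ := by positivity
        nlinarith [e1, e2]
      | succ k =>
        have h1 := grad_succ_bound d B M q (fun a b => (hent (q 0) hq0 a b).1) k
        refine h1.trans ?_
        rw [hK]
        have e1 : (0:ℝ) ≤ (1/2) * ((d:ℝ)*M) * d * ‖(fun k : Fin d => q k.succ)‖ := by
          positivity
        nlinarith [e1]
    refine ⟨|C| * (1+K)^3, min 1 (ε / (1+K)), lt_min one_pos (div_pos hε (by positivity)), ?_⟩
    intro q p hq0 hle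
    have hsnn : (0:ℝ) ≤ ‖(fun k : Fin d => q k.succ)‖ + ‖p‖ := by positivity
    have hq1 : ‖(fun k : Fin d => q k.succ)‖ ≤ 1 := by
      have := hle.trans (min_le_left _ _)
      nlinarith [norm_nonneg p]
    have hG := hgrad q hq0 hq1
    have hbound : ‖(fun k : Fin d => q k.succ)‖ + ‖p + grad d B q‖
        ≤ (1+K) * (‖(fun k : Fin d => q k.succ)‖ + ‖p‖) := by
      have h2 : ‖p + grad d B q‖ ≤ ‖p‖ + ‖grad d B q‖ := norm_add_le _ _
      nlinarith [norm_nonneg p, norm_nonneg (fun k : Fin d => q k.succ)]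
    have hεR : (1+K) * (‖(fun k : Fin d => q k.succ)‖ + ‖p‖) ≤ ε := by
      have h3 : ‖(fun k : Fin d => q k.succ)‖ + ‖p‖ ≤ ε / (1+K) :=
        hle.trans (min_le_right _ _)
      calc (1+K) * (‖(fun k : Fin d => q k.succ)‖ + ‖p‖)
          ≤ (1+K) * (ε / (1+K)) := by
            apply mul_le_mul_of_nonneg_left h3 (by positivity)
        _ = ε := by field_simp
    have hmain := hRb q (p + grad d B q) hq0 (hbound.trans hεR)
    calc |R q (p + grad d B q)|
        ≤ C * (‖(fun k : Fin d => q k.succ)‖ + ‖p + grad d B q‖) ^ 3 := hmain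
      _ ≤ |C| * (‖(fun k : Fin d => q k.succ)‖ + ‖p + grad d B q‖) ^ 3 :=
          mul_le_mul_of_nonneg_right (le_abs_self C) (by positivity)
      _ ≤ |C| * ((1+K) * (‖(fun k : Fin d => q k.succ)‖ + ‖p‖)) ^ 3 :=
          mul_le_mul_of_nonneg_left
            (pow_le_pow_left₀ (by positivity) hbound 3) (abs_nonneg C)
      _ = |C| * (1+K)^3 * (‖(fun k : Fin d => q k.succ)‖ + ‖p‖) ^ 3 := by ring
  · -- the identity
    intro q p
    have hps : (fun i => fderiv ℝ u q (Pi.single i 1)) = grad d B q := funext (hg q)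
    rw [hps, hexp]
    have h0 : (p + grad d B q) 0 = p 0 + grad d B q 0 := rfl
    have hsucc : (fun k : Fin d => (p + grad d B q) k.succ)
        = (fun k : Fin d => p k.succ) + (B (q 0) *ᵥ fun k : Fin d => q k.succ) := by
      funext k
      simp [grad, Matrix.mulVec, dotProduct]
    rw [h0, hsucc]
    set x := (fun k : Fin d => p k.succ) with hx
    set y := (B (q 0) *ᵥ fun k : Fin d => q k.succ) with hy
    rw [add_dotProduct, dotProduct_add, add_dotProduct, add_dotProduct,
      dotProduct_comm y x]
    ring
  · -- axis values
    intro t ht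
    set q : Fin (d+1) → ℝ := t • (Pi.single 0 1 : Fin (d+1) → ℝ) with hq
    have hqs : (fun k : Fin d => q k.succ) = 0 := by
      funext k
      simp [hq, Pi.single_apply, Fin.succ_ne_zero]
    have hg0 : grad d B q 0 = 0 := by
      have : ∀ k : Fin d, q k.succ = 0 := fun k => congrFun hqs k
      simp [grad, this]
    constructor
    · simp only [hg0, hqs]
      simp
    · simp only [hg0]
      simp
end
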